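/- arXiv:1211.4479 — 7 statements merged into one kernel-verified Lean document; each statement's English description precedes it below -/
import Mathlib

section
/- Let n be a nonzero integer and u a complex number. Then f_n(u) = 0 if and only if u = ζ + ζ⁻¹ for some 2n-th root of unity ζ with ζ ≠ ±1. -/
/-!
The recursion determines `f` uniquely, so `f n` is the rescaled Chebyshev polynomial
`S (n - 1)`. Substituting `u = ζ + ζ⁻¹` (always possible over `ℂ`) gives
`(ζ - ζ⁻¹) f_n(ζ + ζ⁻¹) = ζ ^ n - ζ ^ (-n)`, since both sides satisfy the same recursion.
For `ζ ≠ ±1` the factor `ζ - ζ⁻¹` is nonzero, so `f_n(u) = 0` exactly when `ζ ^ (2 n) = 1`;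
for `ζ = ±1`, i.e. `u = ±2`, one has `f_n(±2) = ±n ≠ 0`.
-/

open Polynomial

theorem eq_of_recurrence {R : Type*} [Ring R] (c : R) {F G : ℤ → R}
    (hF : ∀ m, F (m - 1) + F (m + 1) = c * F m) (hG : ∀ m, G (m - 1) + G (m + 1) = c * G m)
    (h0 : F 0 = G 0) (h1 : F 1 = G 1) : F = G := by
  have forward {H : ℤ → R} (hH : ∀ m, H (m - 1) + H (m + 1) = c * H m) (m : ℤ) :
      H (m + 2) = c * H (m + 1) - H m := by
    have := hH (m + 1)
    rw [add_sub_cancel_right, add_assoc, one_add_one_eq_two] at this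
    exact eq_sub_of_add_eq' this
  have backward {H : ℤ → R} (hH : ∀ m, H (m - 1) + H (m + 1) = c * H m) (m : ℤ) :
      H (m - 1) = c * H m - H (m + 1) :=
    eq_sub_of_add_eq (hH m)
  funext m
  induction m using Chebyshev.induct with
  | zero => exact h0
  | one => exact h1
  | add_two n ih1 ih0 => rw [forward hF, forward hG, ih1, ih0]
  | neg_add_one n ih0 ih1 => rw [backward hF, backward hG, ih0, ih1]

section Field

variable {K : Type*} [Field K] {ζ : K}

theorem zpow_sub_zpow_neg_recurrence (hζ : ζ ≠ 0) (m : ℤ) :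
    (ζ ^ (m - 1) - ζ ^ (-(m - 1))) + (ζ ^ (m + 1) - ζ ^ (-(m + 1))) =
      (ζ + ζ⁻¹) * (ζ ^ m - ζ ^ (-m)) := by
  simp only [neg_sub, neg_add, zpow_sub₀ hζ, zpow_add₀ hζ, zpow_neg, zpow_one]
  ring

theorem sub_inv_ne_zero (hζ : ζ ≠ 0) (h1 : ζ ≠ 1) (hm1 : ζ ≠ -1) : ζ - ζ⁻¹ ≠ 0 := by
  rw [sub_ne_zero, Ne, ← mul_eq_one_iff_eq_inv₀ hζ, mul_self_eq_one_iff]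
  exact not_or.2 ⟨h1, hm1⟩

theorem zpow_two_mul_eq_one_iff (hζ : ζ ≠ 0) (n : ℤ) : ζ ^ (2 * n) = 1 ↔ ζ ^ n = ζ ^ (-n) := by
  rw [two_mul, zpow_add₀ hζ, zpow_neg, mul_eq_one_iff_eq_inv₀ (zpow_ne_zero n hζ)]

theorem exists_eq_add_inv [IsAlgClosed K] (u : K) : ∃ ζ : K, ζ ≠ 0 ∧ u = ζ + ζ⁻¹ := by
  have hdeg : (X ^ 2 - C u * X + 1 : K[X]).degree = 2 := by compute_degree!
  obtain ⟨ζ, hζ⟩ := IsAlgClosed.exists_root (X ^ 2 - C u * X + 1) (by simp [hdeg])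
  simp only [IsRoot, eval_add, eval_sub, eval_pow, eval_mul, eval_C, eval_X, eval_one] at hζ
  have hζ0 : ζ ≠ 0 := by
    rintro rfl
    simp at hζ
  refine ⟨ζ, hζ0, ?_⟩
  field_simp
  linear_combination -hζ

namespace Polynomial.Chebyshev

theorem S_eval_add_inv (hζ : ζ ≠ 0) (n : ℤ) :
    (ζ - ζ⁻¹) * (S K n).eval (ζ + ζ⁻¹) = ζ ^ (n + 1) - ζ ^ (-(n + 1)) := by
  refine congrFun (eq_of_recurrence (ζ + ζ⁻¹)
    (F := fun n => (ζ - ζ⁻¹) * (S K n).eval (ζ + ζ⁻¹))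
    (G := fun n => ζ ^ (n + 1) - ζ ^ (-(n + 1))) ?_ ?_ ?_ ?_) n
  · intro m
    simp only [S_add_one K m, eval_sub, eval_mul, eval_X]
    ring
  · intro m
    simpa only [add_sub_cancel_right, sub_add_cancel] using zpow_sub_zpow_neg_recurrence hζ (m + 1)
  · simp only [S_zero, eval_one, mul_one, zero_add, zpow_one, zpow_neg]
  · simp only [S_one, eval_X, one_add_one_eq_two, zpow_neg, zpow_ofNat]
    ring

theorem S_eval_add_inv_eq_zero_iff (hζ : ζ ≠ 0) (h1 : ζ ≠ 1) (hm1 : ζ ≠ -1) (n : ℤ) :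
    (S K n).eval (ζ + ζ⁻¹) = 0 ↔ ζ ^ (2 * (n + 1)) = 1 := by
  rw [← mul_right_inj' (sub_inv_ne_zero hζ h1 hm1), mul_zero, S_eval_add_inv hζ, sub_eq_zero,
    zpow_two_mul_eq_one_iff hζ]

end Polynomial.Chebyshev

end Field

theorem eq_chebyshev_S_sub_one_of_recurrence {R : Type*} [CommRing R] {f : ℤ → R[X]}
    (h0 : f 0 = 0) (h1 : f 1 = 1) (hrec : ∀ n : ℤ, f (n - 1) + f (n + 1) = X * f n) (n : ℤ) :
    f n = Chebyshev.S R (n - 1) := by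
  refine congrFun (eq_of_recurrence X hrec (G := fun n => Chebyshev.S R (n - 1)) ?_ ?_ ?_) n
  · intro m
    rw [sub_sub, one_add_one_eq_two, add_sub_cancel_right, Chebyshev.S_sub_two]
    ring
  · simp [h0]
  · simp [h1]

theorem stmt_7 (f : ℤ → Polynomial ℤ) (h0 : f 0 = 0) (h1 : f 1 = 1)
    (hrec : ∀ n : ℤ, f (n - 1) + f (n + 1) = X * f n) (n : ℤ) (hn : n ≠ 0) (u : ℂ) :
    Polynomial.aeval u (f n) = 0 ↔
      ∃ ζ : ℂ, ζ ^ (2 * n) = 1 ∧ ζ ≠ 1 ∧ ζ ≠ -1 ∧ u = ζ + ζ⁻¹ := by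
  rw [eq_chebyshev_S_sub_one_of_recurrence h0 h1 hrec, Chebyshev.aeval_S]
  constructor
  · intro h
    obtain ⟨ζ, hζ0, rfl⟩ := exists_eq_add_inv u
    have hζ1 : ζ ≠ 1 := by
      rintro rfl
      norm_num [hn] at h
    have hζm1 : ζ ≠ -1 := by
      rintro rfl
      norm_num [hn] at h
    refine ⟨ζ, ?_, hζ1, hζm1, rfl⟩
    simpa using (Chebyshev.S_eval_add_inv_eq_zero_iff hζ0 hζ1 hζm1 (n - 1)).1 h
  · rintro ⟨ζ, hζ, hζ1, hζm1, rfl⟩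
    have hζ0 : ζ ≠ 0 := by
      rintro rfl
      simp [zero_zpow _ (mul_ne_zero two_ne_zero hn)] at hζ
    exact (Chebyshev.S_eval_add_inv_eq_zero_iff hζ0 hζ1 hζm1 (n - 1)).2 (by simpa using hζ)
end

section
/- For every integer n, the polynomial identity (f_{n-1}(u) + 1)·(f_{n+1}(u) + 1) = f_n(u)·(u + f_n(u)) holds, where f_n are the Fibonacci polynomials. -/
open Polynomial

/-! Expanding, the identity is the recursion at `n` plus Cassini's identity
`f_n ^ 2 - f_{n-1} f_{n+1} = 1`. The Cassini quantity is invariant under `n ↦ n + 1` for any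
sequence satisfying the recursion, so it equals its value `1` at `n = 0`. -/

section Cassini

variable {R : Type*} [CommRing R] {f : ℤ → R} {x : R}

theorem periodic_cassini (hrec : ∀ n : ℤ, f (n - 1) + f (n + 1) = x * f n) :
    Function.Periodic (fun m => f m ^ 2 - f (m - 1) * f (m + 1)) 1 := by
  intro m
  have H := hrec (m + 1)
  simp only [add_sub_cancel_right] at H ⊢
  linear_combination f (m + 1) * hrec m - f m * H

theorem cassini (hrec : ∀ n : ℤ, f (n - 1) + f (n + 1) = x * f n) (m : ℤ) :
    f m ^ 2 - f (m - 1) * f (m + 1) = f 0 ^ 2 - f (-1) * f 1 := by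
  simpa using (periodic_cassini hrec).int_mul_eq m

end Cassini

theorem stmt_9 (f : ℤ → Polynomial ℤ) (h0 : f 0 = 0) (h1 : f 1 = 1)
    (hrec : ∀ n : ℤ, f (n - 1) + f (n + 1) = X * f n) (n : ℤ) :
    (f (n - 1) + 1) * (f (n + 1) + 1) = f n * (X + f n) := by
  have hminus1 : f (-1) = -1 := by
    linear_combination (by simpa [h0, h1] using hrec 0 : f (-1) + 1 = 0)
  have hcassini : f n ^ 2 - f (n - 1) * f (n + 1) = 1 := by
    simpa [h0, h1, hminus1] using cassini hrec n
  linear_combination hrec n - hcassini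
end

section
/- For every even integer n = 2m, the identity f_{n-1}(u) - 1 = f_{m-1}(u)·(f_{m+1}(u) - f_{m-1}(u)) holds, and for every odd integer n = 2m+1, the identity f_{n-1}(u) - 1 = (f_m(u) + f_{m-1}(u))·(f_{m+1}(u) - f_m(u)) holds. -/
/-!
Both identities come from the addition formula `f (p + n) = f p * f (n + 1) - f (p - 1) * f n`
at `(p, n) = (m, m - 1)` and `(m, m)`, combined with the Cassini identity
`f (m + 1) * f (m - 1) - f m ^ 2 = -1`. Both rest on two facts about two-sided solutions of
`g (n - 1) + g (n + 1) = u * g n`: such a solution is determined by `g 0` and `g 1` (so the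
addition formula holds because both sides solve the recurrence in `n`), and
`g (n + 1) * g (n - 1) - g n ^ 2` does not depend on `n`.
-/

open Polynomial

variable {R : Type*} [CommRing R]

def IsFibonacciSeq (u : R) (g : ℤ → R) : Prop :=
  ∀ n : ℤ, g (n - 1) + g (n + 1) = u * g n

namespace IsFibonacciSeq

variable {u : R} {g h : ℤ → R}

theorem comp_add_const (hg : IsFibonacciSeq u g) (p : ℤ) :
    IsFibonacciSeq u fun n => g (n + p) := fun n => by
  simpa only [sub_add_eq_add_sub, add_right_comm n 1 p] using hg (n + p)

theorem const_mul_sub_mul (hg : IsFibonacciSeq u g) (hh : IsFibonacciSeq u h) (a b : R) :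
    IsFibonacciSeq u fun n => a * g n - b * h n := fun n => by
  linear_combination a * hg n - b * hh n

theorem ext (hg : IsFibonacciSeq u g) (hh : IsFibonacciSeq u h) (h0 : g 0 = h 0)
    (h1 : g 1 = h 1) : g = h := by
  suffices key : ∀ n : ℤ, g n = h n ∧ g (n + 1) = h (n + 1) from funext fun n => (key n).1
  intro n
  induction n using Int.induction_on with
  | zero => exact ⟨h0, h1⟩
  | succ k ih =>
    refine ⟨ih.2, ?_⟩
    have hgk := hg (k + 1)
    have hhk := hh (k + 1)
    simp only [add_sub_cancel_right] at hgk hhk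
    linear_combination hgk - hhk - ih.1 + u * ih.2
  | pred k ih =>
    refine ⟨?_, by simpa only [sub_add_cancel] using ih.1⟩
    have hgk := hg (-k)
    have hhk := hh (-k)
    linear_combination hgk - hhk - ih.2 + u * ih.1

theorem apply_add (hg : IsFibonacciSeq u g) (hg0 : g 0 = 0) (hg1 : g 1 = 1) (p n : ℤ) :
    g (p + n) = g p * g (n + 1) - g (p - 1) * g n := by
  have hg2 : g 2 = u := by
    have h := hg 1
    norm_num [hg0, hg1] at h
    exact h
  have hp := hg p
  rw [add_comm p n]
  refine congrFun (ext (hg.comp_add_const p) (hg.comp_add_const 1 |>.const_mul_sub_mul hg _ _)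
    ?_ ?_) n
  · simp only [zero_add, hg0, hg1]
    ring
  · simp only [one_add_one_eq_two, add_comm 1 p, hg1, hg2]
    linear_combination hp

theorem cassini (hg : IsFibonacciSeq u g) (n : ℤ) :
    g (n + 1) * g (n - 1) - g n ^ 2 = g 1 * g (-1) - g 0 ^ 2 := by
  set c : ℤ → R := fun n => g (n + 1) * g (n - 1) - g n ^ 2
  -- `c (n + 1) - c n = g n * (g (n + 2) + g n) - g (n + 1) * (g (n + 1) + g (n - 1))`
  have hc : Function.Periodic c 1 := fun n => by
    have h1 := hg (n + 1)
    simp only [add_sub_cancel_right, add_assoc, one_add_one_eq_two] at h1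
    simp only [c, add_sub_cancel_right, add_assoc, one_add_one_eq_two]
    linear_combination g n * h1 - g (n + 1) * hg n
  simpa [c] using hc.int_mul_eq n

theorem cassini_of_zero_one (hg : IsFibonacciSeq u g) (hg0 : g 0 = 0) (hg1 : g 1 = 1) (n : ℤ) :
    g (n + 1) * g (n - 1) - g n ^ 2 = -1 := by
  have h := hg 0
  simp only [zero_sub, zero_add, hg0, hg1, mul_zero] at h
  rw [hg.cassini, hg0, hg1]
  linear_combination h

end IsFibonacciSeq

theorem stmt_11 (f : ℤ → Polynomial ℤ) (h0 : f 0 = 0) (h1 : f 1 = 1)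
    (hrec : ∀ n : ℤ, f (n - 1) + f (n + 1) = X * f n) (m : ℤ) :
    f (2 * m - 1) - 1 = f (m - 1) * (f (m + 1) - f (m - 1)) ∧
    f (2 * m) - 1 = (f m + f (m - 1)) * (f (m + 1) - f m) := by
  have hf : IsFibonacciSeq X f := hrec
  have hcas := hf.cassini_of_zero_one h0 h1 m
  have hodd := hf.apply_add h0 h1 m (m - 1)
  have heven := hf.apply_add h0 h1 m m
  rw [← add_sub_assoc, ← two_mul, sub_add_cancel] at hodd
  rw [← two_mul] at heven
  constructor
  · linear_combination hodd - hcas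
  · linear_combination heven - hcas
end

section
/- For every nonzero integer n, the Fibonacci polynomial f_n is separable: it has no repeated roots over ℂ. -/
/-!
The recurrence with `f 0 = 0`, `f 1 = 1` is the one of the rescaled Chebyshev polynomials `S`,
so `f n = S (n - 1)`, and `S m = U m (X / 2)`. For `m ≥ 0` the polynomial `U m` has degree `m`
and the `m` distinct real roots `cos ((k + 1) π / (m + 1))`, so it is separable; negative
indices reduce to this through `U (-m - 2) = -U m`, and separability survives the substitution
`X ↦ X / 2` because its derivative is a unit.
-/

open Polynomial

namespace Polynomial

variable {R : Type*} [CommRing R]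

theorem Separable.neg {p : R[X]} (hp : p.Separable) : (-p).Separable := by
  rw [Separable, derivative_neg]
  exact hp.neg_neg

theorem Separable.comp_of_isUnit_derivative {p q : R[X]} (hp : p.Separable)
    (hq : IsUnit (derivative q)) : (p.comp q).Separable := by
  rw [Separable, derivative_comp]
  exact (isCoprime_mul_unit_left_right hq _ _).mpr (IsCoprime.map hp (compRingHom q))

namespace Chebyshev

theorem eq_S_sub_one_of_recurrence {f : ℤ → R[X]} (h0 : f 0 = 0) (h1 : f 1 = 1)
    (hrec : ∀ n, f (n - 1) + f (n + 1) = X * f n) (n : ℤ) : f n = S R (n - 1) := by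
  suffices ∀ n : ℤ, f n = S R (n - 1) ∧ f (n + 1) = S R n from (this n).1
  intro n
  induction n using Int.induction_on with
  | zero => simp [h0, h1]
  | succ k ih =>
    refine ⟨by simpa using ih.2, ?_⟩
    rw [S_add_one, ← ih.1, ← ih.2]
    have hk := hrec (k + 1)
    rw [add_sub_cancel_right] at hk
    linear_combination hk
  | pred k ih =>
    refine ⟨?_, by simpa using ih.1⟩
    rw [S_sub_one, sub_add_cancel, ← ih.1, ← ih.2]
    linear_combination hrec (-k)

theorem separable_U_real_natCast (n : ℕ) : (U ℝ n).Separable := by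
  have hinj := (Finset.range n).nodup_map_iff_injOn.mp (roots_U_real_nodup n)
  have hsplits : (U ℝ n).Splits := by
    rw [splits_iff_card_roots, roots_U_real, natDegree_U_natCast, Finset.card_val,
      Finset.card_image_of_injOn hinj, Finset.card_range]
  have hne : U ℝ n ≠ 0 := fun h => by simpa [h] using degree_U_natCast ℝ n
  refine (nodup_roots_iff_of_splits hne hsplits).mp ?_
  rw [roots_U_real]
  exact Finset.nodup _

theorem separable_U_real {n : ℤ} (hn : n ≠ -1) : (U ℝ n).Separable := by
  rcases le_or_gt 0 n with hpos | hneg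
  · lift n to ℕ using hpos
    exact separable_U_real_natCast n
  · obtain ⟨m, rfl⟩ : ∃ m : ℕ, n = -m - 2 := ⟨(-n - 2).toNat, by omega⟩
    rw [U_neg_sub_two]
    exact (separable_U_real_natCast m).neg

theorem separable_S_complex {n : ℤ} (hn : n ≠ -1) : (S ℂ n).Separable := by
  rw [S_eq_U_comp_half_mul_X, ← map_U (algebraMap ℝ ℂ)]
  refine (separable_U_real hn).map.comp_of_isUnit_derivative ?_
  simp

end Chebyshev

end Polynomial

theorem stmt_12 (f : ℤ → Polynomial ℤ) (h0 : f 0 = 0) (h1 : f 1 = 1)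
    (hrec : ∀ n : ℤ, f (n - 1) + f (n + 1) = X * f n) (n : ℤ) (hn : n ≠ 0) :
    ((f n).map (Int.castRingHom ℂ)).Separable := by
  rw [Chebyshev.eq_S_sub_one_of_recurrence h0 h1 hrec n, Chebyshev.map_S]
  exact Chebyshev.separable_S_complex (by omega)
end

section
/- Let n be an even integer, n = 2m. Then for every nonzero complex number s with s ≠ ±1, f_{m+1}(s + s⁻¹) - f_{m-1}(s + s⁻¹) = sᵐ + s⁻ᵐ. Consequently, the zeros of ℓ_n(u) = f_{m+1}(u) - f_{m-1}(u) are exactly the numbers u = s + s⁻¹ where sⁿ = -1. -/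
open Polynomial

/-!
The recurrence identifies `f n` with the Vieta–Fibonacci polynomial `S (n - 1)`, so
`f (m + 1) - f (m - 1)` is the Vieta–Lucas polynomial `C m`, which maps `s + s⁻¹` to
`s ^ m + s ^ (-m)`. Over `ℂ` every `u` has the form `s + s⁻¹` (a root of `X² - u X + 1`), and
`s ^ m + s ^ (-m) = 0` exactly when `s ^ (2 * m) = -1`.
-/

namespace Polynomial.Chebyshev

theorem eq_S_sub_one_of_rec {R : Type*} [CommRing R] (f : ℤ → R[X]) (h0 : f 0 = 0)
    (h1 : f 1 = 1) (hrec : ∀ n : ℤ, f (n - 1) + f (n + 1) = X * f n) (n : ℤ) :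
    f n = S R (n - 1) := by
  induction n using Polynomial.Chebyshev.induct with
  | zero => simp [h0]
  | one => simp [h1]
  | add_two n ih1 ih2 =>
    linear_combination (norm := ring_nf) hrec (n + 1) - ih2 + X * ih1 - S_add_one R n
  | neg_add_one n ih1 ih2 =>
    linear_combination (norm := ring_nf) hrec (-n) - ih2 + X * ih1 - S_sub_one R (-n - 1)

theorem C_eq_S_sub_S {R : Type*} [CommRing R] (n : ℤ) : C R n = S R n - S R (n - 2) := by
  linear_combination (norm := ring_nf) C_eq_S_sub_X_mul_S R n + S_eq R n

theorem aeval_C_add_inv {R K : Type*} [CommRing R] [Field K] [Algebra R K] {s : K} (hs : s ≠ 0)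
    (n : ℤ) : aeval (s + s⁻¹) (C R n) = s ^ n + s ^ (-n) := by
  have hnat (k : ℕ) : (C K k).eval (s + s⁻¹) = s ^ k + s⁻¹ ^ k := by
    rw [← dickson_one_one_eq_chebyshev_C, dickson_one_one_eval_add_inv _ _ (mul_inv_cancel₀ hs)]
  rw [aeval_def, ← eval_map, map_C]
  obtain ⟨k, rfl | rfl⟩ := Int.eq_nat_or_neg n
  · simp [hnat]
  · simp [C_neg, hnat, add_comm]

end Polynomial.Chebyshev

theorem IsAlgClosed.exists_add_inv_eq {K : Type*} [Field K] [IsAlgClosed K] (u : K) :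
    ∃ s : K, s ≠ 0 ∧ s + s⁻¹ = u := by
  obtain ⟨s, hs⟩ := IsAlgClosed.exists_root (X ^ 2 - C u * X + 1 : K[X]) (by
    rw [show (X ^ 2 - C u * X + 1 : K[X]).degree = 2 by compute_degree!]
    norm_num)
  have hsu : s * (u - s) = 1 := by
    simp only [IsRoot, eval_add, eval_sub, eval_pow, eval_mul, eval_C, eval_X, eval_one] at hs
    linear_combination -hs
  refine ⟨s, left_ne_zero_of_mul_eq_one hsu, ?_⟩
  rw [inv_eq_of_mul_eq_one_right hsu]
  ring

theorem zpow_add_zpow_neg_eq_zero_iff {K : Type*} [Field K] {s : K} (hs : s ≠ 0) (m : ℤ) :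
    s ^ m + s ^ (-m) = 0 ↔ s ^ (2 * m) = -1 := by
  have hsm : s ^ m ≠ 0 := zpow_ne_zero m hs
  rw [zpow_neg, two_mul, zpow_add₀ hs]
  constructor <;> intro h
  · field_simp at h
    linear_combination h
  · field_simp
    linear_combination h

theorem ne_zero_of_zpow_eq_neg_one {K : Type*} [Field K] [CharZero K] {s : K} {n : ℤ}
    (h : s ^ n = -1) : s ≠ 0 := by
  rintro rfl
  rw [zero_zpow_eq] at h
  split_ifs at h <;> norm_num at h

theorem stmt_15 (f : ℤ → Polynomial ℤ) (h0 : f 0 = 0) (h1 : f 1 = 1)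
    (hrec : ∀ n : ℤ, f (n - 1) + f (n + 1) = X * f n) (n m : ℤ) (hnm : n = 2 * m) :
    (∀ s : ℂ, s ≠ 0 → s ≠ 1 → s ≠ -1 →
      Polynomial.aeval (s + s⁻¹) (f (m + 1) - f (m - 1)) = s ^ m + s ^ (-m)) ∧
    (∀ u : ℂ, Polynomial.aeval u (f (m + 1) - f (m - 1)) = 0 ↔
      ∃ s : ℂ, s ^ n = -1 ∧ u = s + s⁻¹) := by
  have hlucas : f (m + 1) - f (m - 1) = Chebyshev.C ℤ m := by
    rw [Chebyshev.C_eq_S_sub_S, Chebyshev.eq_S_sub_one_of_rec f h0 h1 hrec,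
      Chebyshev.eq_S_sub_one_of_rec f h0 h1 hrec]
    ring_nf
  have heval {s : ℂ} (hs : s ≠ 0) :
      aeval (s + s⁻¹) (f (m + 1) - f (m - 1)) = s ^ m + s ^ (-m) := by
    rw [hlucas, Chebyshev.aeval_C_add_inv hs]
  subst hnm
  refine ⟨fun s hs _ _ => heval hs, fun u => ⟨fun hu => ?_, ?_⟩⟩
  · obtain ⟨s, hs, rfl⟩ := IsAlgClosed.exists_add_inv_eq u
    rw [heval hs, zpow_add_zpow_neg_eq_zero_iff hs] at hu
    exact ⟨s, hu, rfl⟩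
  · rintro ⟨s, hsn, rfl⟩
    have hs := ne_zero_of_zpow_eq_neg_one hsn
    rw [heval hs, zpow_add_zpow_neg_eq_zero_iff hs]
    exact hsn
end

section
/- For every integer m ≥ 1, the polynomial q_m(b) = b^{2m} - b^{m+1} + b^{m-1} + 1 has no root that is a root of unity. -/
/- On the unit circle conjugation is inversion, so a root `ω` of `q_m` is also a root of the reversed
polynomial `1 - b^{m-1} + b^{m+1} + b^{2m}`. Subtracting the two equations gives `ω² = 1`, adding them
gives `ω^{2m} = -1`, and these are incompatible. -/

theorem eval_inv_eq_zero_of_norm_eq_one {ω : ℂ} (hω : ‖ω‖ = 1) (n : ℕ)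
    (h : ω ^ (2 * n + 2) - ω ^ (n + 2) + ω ^ n + 1 = 0) :
    ω⁻¹ ^ (2 * n + 2) - ω⁻¹ ^ (n + 2) + ω⁻¹ ^ n + 1 = 0 := by
  simpa [← Complex.inv_eq_conj hω] using congrArg (starRingEnd ℂ) h

theorem reversed_eq_zero_of_eval_inv_eq_zero {K : Type*} [Field K] {x : K} (hx : x ≠ 0) (n : ℕ)
    (h : x⁻¹ ^ (2 * n + 2) - x⁻¹ ^ (n + 2) + x⁻¹ ^ n + 1 = 0) :
    1 - x ^ n + x ^ (n + 2) + x ^ (2 * n + 2) = 0 := by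
  have cancel (a b : ℕ) : x ^ (a + b) * x⁻¹ ^ b = x ^ a := by
    rw [pow_add, mul_assoc, ← mul_pow, mul_inv_cancel₀ hx, one_pow, mul_one]
  linear_combination x ^ (2 * n + 2) * h - cancel 0 (2 * n + 2) + cancel n (n + 2) - cancel (n + 2) n

theorem not_eq_zero_and_reversed_eq_zero {K : Type*} [Field K] [NeZero (2 : K)] {x : K}
    (hx : x ≠ 0) (n : ℕ) (h : x ^ (2 * n + 2) - x ^ (n + 2) + x ^ n + 1 = 0)
    (hrev : 1 - x ^ n + x ^ (n + 2) + x ^ (2 * n + 2) = 0) : False := by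
  have hsq : x ^ 2 = 1 := by
    have : 2 * x ^ n * (x ^ 2 - 1) = 0 := by linear_combination hrev - h
    exact sub_eq_zero.mp <|
      (mul_eq_zero.mp this).resolve_left (mul_ne_zero two_ne_zero (pow_ne_zero n hx))
  have hpow : x ^ (2 * n + 2) = 1 := by rw [← mul_add_one, pow_mul, hsq, one_pow]
  exact two_ne_zero (α := K) (by linear_combination h - hpow + x ^ n * hsq)

theorem stmt_16 (m : ℕ) (hm : 1 ≤ m) (ω : ℂ)
    (hω : ∃ k : ℕ, 1 ≤ k ∧ ω ^ k = 1) :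
    ω ^ (2 * m) - ω ^ (m + 1) + ω ^ (m - 1) + 1 ≠ 0 := by
  obtain ⟨k, hk, hωk⟩ := hω
  have hnorm : ‖ω‖ = 1 := Complex.norm_eq_one_of_pow_eq_one hωk (by omega)
  have hω0 : ω ≠ 0 := norm_ne_zero_iff.mp (by simp [hnorm])
  obtain ⟨n, rfl⟩ : ∃ n, m = n + 1 := ⟨m - 1, by omega⟩
  intro h
  rw [Nat.add_sub_cancel, mul_add_one] at h
  exact not_eq_zero_and_reversed_eq_zero hω0 n h <|
    reversed_eq_zero_of_eval_inv_eq_zero hω0 n (eval_inv_eq_zero_of_norm_eq_one hnorm n h)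
end

section
/- For every odd integer n ≥ 3, the only roots of r_n(x) = x^{2n} - x^{n+2} + x^{n-2} + 1 that are roots of unity are x = i and x = -i, and each is a simple root of r_n. -/
/-!
On the unit circle `conj ω = ω⁻¹`, so multiplying `r_n(ω) = 0` by `conj ω ^ n` gives
`ω ^ n + conj ω ^ n = ω ^ 2 - conj ω ^ 2`. The left side is real and the right side purely
imaginary, so both vanish; hence `ω ^ 4 = 1` and `ω ^ (2 * n) = -1`, and since `n` is odd,
`ω ^ 2 = ω ^ (2 * n) = -1`.

Conversely, `ω ^ 2 = -1` gives `ω ^ (n + 2) = ω ^ (n - 2)`, so `r_n(ω) = ω ^ (2 * n) + 1 = 0`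
and `ω * r_n'(ω) = -2 * n - 4 * ω ^ (n - 2)`, which has norm at least `2 * n - 4 > 0`.
-/

open Polynomial ComplexConjugate

noncomputable def rPoly {R : Type*} [CommRing R] (n : ℕ) : R[X] :=
  X ^ (2 * n) - X ^ (n + 2) + X ^ (n - 2) + 1

section CommRing

variable {R : Type*} [CommRing R] {n : ℕ} {ω : R}

theorem X_mul_derivative_X_pow (k : ℕ) :
    (X : R[X]) * derivative (X ^ k) = (k : R[X]) * X ^ k := by
  rcases k with _ | k
  · simp
  · rw [derivative_X_pow, C_eq_natCast, Nat.add_sub_cancel, mul_left_comm, ← pow_succ']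

theorem X_mul_derivative_rPoly (n : ℕ) :
    (X : R[X]) * derivative (rPoly n) = ((2 * n : ℕ) : R[X]) * X ^ (2 * n) -
      ((n + 2 : ℕ) : R[X]) * X ^ (n + 2) + ((n - 2 : ℕ) : R[X]) * X ^ (n - 2) := by
  simp only [rPoly, derivative_add, derivative_sub, derivative_one, mul_add, mul_sub,
    add_zero, X_mul_derivative_X_pow]

theorem pow_add_two_eq_pow_sub_two (hn : 2 ≤ n) (hω : ω ^ 2 = -1) :
    ω ^ (n + 2) = ω ^ (n - 2) := by
  rw [show n + 2 = n - 2 + 2 * 2 by omega, pow_add, pow_mul, hω]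
  norm_num

theorem eval_rPoly_eq_zero_of_sq_eq_neg_one (hodd : Odd n) (hn : 2 ≤ n) (hω : ω ^ 2 = -1) :
    (rPoly n).eval ω = 0 := by
  simp only [rPoly, eval_add, eval_sub, eval_pow, eval_X, eval_one,
    pow_add_two_eq_pow_sub_two hn hω, pow_mul, hω, hodd.neg_one_pow]
  ring

theorem mul_eval_derivative_rPoly_of_sq_eq_neg_one (hodd : Odd n) (hn : 2 ≤ n)
    (hω : ω ^ 2 = -1) : ω * (derivative (rPoly n)).eval ω = -2 * n - 4 * ω ^ (n - 2) := by
  have := congrArg (eval ω) (X_mul_derivative_rPoly (R := R) n)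
  simp only [eval_mul, eval_X, eval_add, eval_sub, eval_natCast, eval_pow] at this
  rw [this, pow_add_two_eq_pow_sub_two hn hω, pow_mul, hω, hodd.neg_one_pow]
  push_cast [hn]
  ring

theorem pow_add_pow_eq_sq_sub_sq_of_eval_rPoly_eq_zero (hn : 2 ≤ n) {c : R} (hc : ω * c = 1)
    (h : (rPoly n).eval ω = 0) : ω ^ n + c ^ n = ω ^ 2 - c ^ 2 := by
  obtain ⟨m, rfl⟩ := Nat.exists_eq_add_of_le' hn
  have hcm : (ω * c) ^ m = 1 := by rw [hc, one_pow]
  have hcn : (ω * c) ^ (m + 2) = 1 := by rw [hc, one_pow]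
  simp only [rPoly, eval_add, eval_sub, eval_pow, eval_X, eval_one, Nat.add_sub_cancel] at h
  linear_combination c ^ (m + 2) * h - (ω ^ (m + 2) - ω ^ 2) * hcn - c ^ 2 * hcm

end CommRing

theorem eval_derivative_rPoly_ne_zero_of_sq_eq_neg_one {n : ℕ} (hodd : Odd n) (hn : 3 ≤ n)
    {ω : ℂ} (hω : ω ^ 2 = -1) : (derivative (rPoly n)).eval ω ≠ 0 := by
  have hnorm : ‖ω‖ = 1 := by
    have := congrArg norm hω
    rw [norm_pow, norm_neg, norm_one] at this
    exact (pow_eq_one_iff_of_nonneg (norm_nonneg ω) two_ne_zero).1 this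
  intro h
  have hmul := mul_eval_derivative_rPoly_of_sq_eq_neg_one hodd (by omega) hω
  rw [h, mul_zero, eq_comm, sub_eq_zero] at hmul
  have h2n : 2 * (n : ℝ) = 4 := by simpa [norm_pow, hnorm] using congrArg norm hmul
  have : 2 * n = 4 := by exact_mod_cast h2n
  omega

theorem sq_eq_neg_one_of_eval_rPoly_eq_zero {n : ℕ} (hodd : Odd n) (hn : 2 ≤ n) {ω : ℂ}
    (hω : ‖ω‖ = 1) (h : (rPoly n).eval ω = 0) : ω ^ 2 = -1 := by
  have hc : ω * conj ω = 1 := by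
    rw [Complex.mul_conj', hω]; norm_num
  have hA := pow_add_pow_eq_sq_sub_sq_of_eval_rPoly_eq_zero hn hc h
  have hsq : ω ^ 2 - conj ω ^ 2 = 0 := by
    have h1 : conj (ω ^ 2 - conj ω ^ 2) = ω ^ 2 - conj ω ^ 2 := by
      rw [← hA]; simp [add_comm]
    have h2 : conj (ω ^ 2 - conj ω ^ 2) = -(ω ^ 2 - conj ω ^ 2) := by simp
    exact self_eq_neg.1 (h1.symm.trans h2)
  have hsum : ω ^ n + conj ω ^ n = 0 := hA.trans hsq
  have h4 : (ω ^ 2) ^ 2 = 1 := by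
    linear_combination ω ^ 2 * hsq + (ω * conj ω + 1) * hc
  have hcn : (ω * conj ω) ^ n = 1 := by rw [hc, one_pow]
  have h2n : (ω ^ 2) ^ n = -1 := by linear_combination ω ^ n * hsum - hcn
  obtain ⟨k, rfl⟩ := hodd
  rwa [pow_succ, pow_mul, h4, one_pow, one_mul] at h2n

theorem eval_rPoly_eq_zero_iff_sq_eq_neg_one {n : ℕ} (hodd : Odd n) (hn : 2 ≤ n) {ω : ℂ}
    (hω : ‖ω‖ = 1) : (rPoly n).eval ω = 0 ↔ ω ^ 2 = -1 :=
  ⟨sq_eq_neg_one_of_eval_rPoly_eq_zero hodd hn hω, eval_rPoly_eq_zero_of_sq_eq_neg_one hodd hn⟩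

theorem stmt_17 (n : ℕ) (hodd : Odd n) (hn : 3 ≤ n)
    (p : Polynomial ℂ) (hp : p = X ^ (2 * n) - X ^ (n + 2) + X ^ (n - 2) + 1) :
    (∀ ω : ℂ, (∃ k : ℕ, 1 ≤ k ∧ ω ^ k = 1) →
      (p.eval ω = 0 ↔ ω = Complex.I ∨ ω = -Complex.I)) ∧
    p.eval Complex.I = 0 ∧ p.derivative.eval Complex.I ≠ 0 ∧
    p.eval (-Complex.I) = 0 ∧ p.derivative.eval (-Complex.I) ≠ 0 := by
  have hpr : p = rPoly n := hp
  subst hpr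
  have hI : Complex.I ^ 2 = -1 := Complex.I_sq
  have hnegI : (-Complex.I) ^ 2 = -1 := by rw [neg_sq, hI]
  refine ⟨fun ω ⟨k, hk, hωk⟩ => ?_,
    eval_rPoly_eq_zero_of_sq_eq_neg_one hodd (by omega) hI,
    eval_derivative_rPoly_ne_zero_of_sq_eq_neg_one hodd hn hI,
    eval_rPoly_eq_zero_of_sq_eq_neg_one hodd (by omega) hnegI,
    eval_derivative_rPoly_ne_zero_of_sq_eq_neg_one hodd hn hnegI⟩
  have hω : ‖ω‖ = 1 := Complex.norm_eq_one_of_pow_eq_one hωk (by omega)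
  rw [eval_rPoly_eq_zero_iff_sq_eq_neg_one hodd (by omega) hω, ← hI, sq_eq_sq_iff_eq_or_eq_neg]
end
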